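/- arXiv:1810.04065 — 2 statements merged into one kernel-verified Lean document; each statement's English description precedes it below -/
import Mathlib

section
/- Toy model standard accuracy: Let Y be uniform on {±1}, and conditionally on Y let X ∈ ℝᵖ have first coordinate X¹ = Y with probability 0.7 and −Y with probability 0.3, and independent coordinates Xʲ ∼ N(ηY, 1) for j = 2,…,p. Let w = (0, 1/(p−1), …, 1/(p−1)) and h(x) = sign(wᵀx). Then P(h(X) = Y) ≥ 1 − exp(−(p−1)η²/2). In particular, for δ ∈ (0,1], if η ≥ √(2·log(1/δ)/(p−1)) then the accuracy is at least 1 − δ. -/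
/-!
Given the label `Y = y`, the classifier only looks at `T = ∑_{j ≥ 2} Xʲ`, and it errs only if
`y T ≤ 0`. Since `y² = 1`, this says that the sum of the `p − 1` independent standard Gaussians
`η − y Xʲ` is at least `(p − 1)η`, and the Chernoff bound for a sum of independent sub-Gaussian
variables bounds this by `exp (−(p − 1)²η² / (2(p − 1))) = exp (−(p − 1)η² / 2)`, for either label.
-/

open MeasureTheory ProbabilityTheory
open scoped ENNReal

/-- Conditional feature distribution of the toy model given label `y ∈ {±1}`:
first coordinate equals `y` w.p. 0.7 and `-y` w.p. 0.3; the other coordinates are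
independent `N(ηy, 1)`. -/
noncomputable def toyCond (p : ℕ) (η y : ℝ) : Measure (Fin p → ℝ) :=
  Measure.pi fun j =>
    if (j : ℕ) = 0 then (7 / 10 : ℝ≥0∞) • Measure.dirac y + (3 / 10 : ℝ≥0∞) • Measure.dirac (-y)
    else gaussianReal (η * y) 1

/-- Joint distribution of `(X, Y)` in the toy model, with `Y` uniform on `{±1}`. -/
noncomputable def toyJoint (p : ℕ) (η : ℝ) : Measure ((Fin p → ℝ) × ℝ) :=
  (1 / 2 : ℝ≥0∞) • ((toyCond p η 1).map (fun x => (x, (1 : ℝ)))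
    + (toyCond p η (-1)).map (fun x => (x, (-1 : ℝ))))

/-- The averaging weight vector `w = (0, 1/(p−1), …, 1/(p−1))`. -/
noncomputable def toyW (p : ℕ) : Fin p → ℝ :=
  fun j => if (j : ℕ) = 0 then 0 else 1 / ((p : ℝ) - 1)

/-- The linear classifier `h(x) = sign(wᵀx)`. -/
noncomputable def toyH (p : ℕ) (x : Fin p → ℝ) : ℝ :=
  if 0 ≤ ∑ j, toyW p j * x j then 1 else -1

open scoped NNReal Finset

lemma hasSubgaussianMGF_gaussianReal_sub (m : ℝ) (v : ℝ≥0) :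
    HasSubgaussianMGF (fun x ↦ x - m) v (gaussianReal m v) where
  integrable_exp_mul t := by
    simpa [mul_sub, Real.exp_sub] using
      (integrable_exp_mul_gaussianReal (μ := m) (v := v) t).div_const (Real.exp (t * m))
  mgf_le t := by
    rw [mgf_gaussianReal (by rw [gaussianReal_map_sub_const, sub_self])]
    simp

lemma measureReal_pi_sum_mul_sub_ge_le_of_gaussianReal {ι : Type*} [Fintype ι]
    {μ : ι → Measure ℝ} [∀ i, IsProbabilityMeasure (μ i)] {s : Finset ι} {m : ι → ℝ} {v : ι → ℝ≥0}
    (hμ : ∀ i ∈ s, μ i = gaussianReal (m i) (v i)) (a : ι → ℝ) {ε : ℝ} (hε : 0 ≤ ε) :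
    (Measure.pi μ).real {x | ε ≤ ∑ i ∈ s, a i * (x i - m i)}
      ≤ Real.exp (-ε ^ 2 / (2 * ∑ i ∈ s, a i ^ 2 * v i)) := by
  have hindep : iIndepFun (fun i (x : ι → ℝ) ↦ a i * (x i - m i)) (Measure.pi μ) :=
    iIndepFun_pi (X := fun i t ↦ a i * (t - m i)) fun i ↦ by fun_prop
  have hsub : ∀ i ∈ s, HasSubgaussianMGF (fun x : ι → ℝ ↦ a i * (x i - m i))
      (⟨a i ^ 2, sq_nonneg _⟩ * v i) (Measure.pi μ) := by
    intro i hi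
    have hmap : (Measure.pi μ).map (fun x ↦ x i) = gaussianReal (m i) (v i) := by
      rw [(measurePreserving_eval μ i).map_eq, hμ i hi]
    refine HasSubgaussianMGF.of_map (X := fun t ↦ a i * (t - m i))
      (measurable_pi_apply i).aemeasurable ?_
    rw [hmap]
    exact (hasSubgaussianMGF_gaussianReal_sub (m i) (v i)).const_mul (a i)
  convert HasSubgaussianMGF.measure_sum_ge_le_of_iIndepFun hindep hsub hε using 6
  push_cast
  rfl

lemma isProbabilityMeasure_smul_dirac_add_smul_dirac {α : Type*} [MeasurableSpace α]
    {a b : ℝ≥0∞} (hab : a + b = 1) (x y : α) :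
    IsProbabilityMeasure (a • Measure.dirac x + b • Measure.dirac y) :=
  ⟨by simp [hab]⟩

lemma isProbabilityMeasure_toyCond_coord (p : ℕ) (η y : ℝ) (j : Fin p) :
    IsProbabilityMeasure (if (j : ℕ) = 0 then
      (7 / 10 : ℝ≥0∞) • Measure.dirac y + (3 / 10 : ℝ≥0∞) • Measure.dirac (-y)
      else gaussianReal (η * y) 1) := by
  split
  · refine isProbabilityMeasure_smul_dirac_add_smul_dirac ?_ y (-y)
    rw [ENNReal.div_add_div_same]
    norm_num
    exact ENNReal.div_self (by norm_num) (by norm_num)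
  · infer_instance

instance isProbabilityMeasure_toyCond (p : ℕ) (η y : ℝ) :
    IsProbabilityMeasure (toyCond p η y) :=
  have := isProbabilityMeasure_toyCond_coord p η y
  Measure.pi.instIsProbabilityMeasure _

lemma measurable_toyH (p : ℕ) : Measurable (toyH p) :=
  Measurable.ite (measurableSet_le measurable_const (by fun_prop)) measurable_const
    measurable_const

lemma toyJoint_real_toyH_eq (p : ℕ) (η : ℝ) :
    (toyJoint p η {z | toyH p z.1 = z.2}).toReal
      = ((toyCond p η 1).real {x | toyH p x = 1}
          + (toyCond p η (-1)).real {x | toyH p x = -1}) / 2 := by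
  have hE : MeasurableSet {z : (Fin p → ℝ) × ℝ | toyH p z.1 = z.2} :=
    measurableSet_eq_fun ((measurable_toyH p).comp measurable_fst) measurable_snd
  rw [toyJoint, Measure.smul_apply, Measure.add_apply,
    Measure.map_apply measurable_prodMk_right hE, Measure.map_apply measurable_prodMk_right hE,
    smul_eq_mul, ENNReal.toReal_mul,
    ENNReal.toReal_add (measure_ne_top _ _) (measure_ne_top _ _)]
  simp [measureReal_def, div_eq_inv_mul]

lemma sum_toyW_mul (p : ℕ) (x : Fin p → ℝ) :
    ∑ j, toyW p j * x j = (∑ j : Fin p with j.val ≠ 0, x j) / ((p : ℝ) - 1) := by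
  rw [Finset.sum_filter, Finset.sum_div]
  refine Finset.sum_congr rfl fun j _ ↦ ?_
  by_cases hj : j.val = 0 <;> simp [toyW, hj, div_eq_inv_mul]

lemma card_filter_val_ne_zero (p : ℕ) : #{j : Fin p | j.val ≠ 0} = p - 1 := by
  rcases p with _ | n
  · simp
  · simp [Fin.val_eq_zero_iff, Finset.filter_ne']

lemma sum_toyW_mul_nonneg_iff {p : ℕ} (hp : 2 ≤ p) (x : Fin p → ℝ) :
    0 ≤ ∑ j, toyW p j * x j ↔ 0 ≤ ∑ j : Fin p with j.val ≠ 0, x j := by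
  have hp1 : (0 : ℝ) < p - 1 := sub_pos.2 (Nat.one_lt_cast.2 hp)
  rw [sum_toyW_mul, le_div_iff₀ hp1, zero_mul]

lemma mul_sum_nonpos_of_toyH_ne {p : ℕ} (hp : 2 ≤ p) {x : Fin p → ℝ} {y : ℝ}
    (hy : y = 1 ∨ y = -1) (hx : toyH p x ≠ y) : y * ∑ j : Fin p with j.val ≠ 0, x j ≤ 0 := by
  unfold toyH at hx
  rcases hy with rfl | rfl <;> split_ifs at hx with h <;> norm_num at hx <;>
    rw [sum_toyW_mul_nonneg_iff hp] at h <;> linarith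

lemma toyCond_real_toyH_ne_le {p : ℕ} (hp : 2 ≤ p) {η : ℝ} (hη : 0 ≤ η) {y : ℝ}
    (hy : y = 1 ∨ y = -1) :
    (toyCond p η y).real {x | toyH p x ≠ y} ≤ Real.exp (-((p : ℝ) - 1) * η ^ 2 / 2) := by
  have := isProbabilityMeasure_toyCond_coord p η y
  have hp1 : (0 : ℝ) < p - 1 := sub_pos.2 (Nat.one_lt_cast.2 hp)
  have hcard : (#{j : Fin p | j.val ≠ 0} : ℝ) = p - 1 := by
    rw [card_filter_val_ne_zero, Nat.cast_sub (by omega), Nat.cast_one]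
  have hy2 : y ^ 2 = 1 := by rcases hy with rfl | rfl <;> norm_num
  have hsub : {x | toyH p x ≠ y}
      ⊆ {x | ((p : ℝ) - 1) * η ≤ ∑ j : Fin p with j.val ≠ 0, -y * (x j - η * y)} := by
    intro x hx
    have hyT := mul_sum_nonpos_of_toyH_ne hp hy hx
    simp only [Set.mem_ofPred_eq, mul_sub, Finset.sum_sub_distrib, Finset.sum_const,
      ← Finset.mul_sum, nsmul_eq_mul, hcard]
    linear_combination hyT + ((1 - (p : ℝ)) * η) * hy2
  calc (toyCond p η y).real {x | toyH p x ≠ y}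
      ≤ (toyCond p η y).real
          {x | ((p : ℝ) - 1) * η ≤ ∑ j : Fin p with j.val ≠ 0, -y * (x j - η * y)} :=
        measureReal_mono hsub
    _ ≤ Real.exp (-(((p : ℝ) - 1) * η) ^ 2
          / (2 * ∑ j : Fin p with j.val ≠ 0, (-y) ^ 2 * (1 : ℝ≥0))) :=
        measureReal_pi_sum_mul_sub_ge_le_of_gaussianReal
          (fun j hj ↦ if_neg (Finset.mem_filter.1 hj).2) _ (mul_nonneg hp1.le hη)
    _ = Real.exp (-((p : ℝ) - 1) * η ^ 2 / 2) := by
        congr 1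
        simp only [neg_sq, hy2, NNReal.coe_one, mul_one, Finset.sum_const, nsmul_eq_mul, hcard]
        field_simp

lemma toyCond_real_toyH_eq_ge {p : ℕ} (hp : 2 ≤ p) {η : ℝ} (hη : 0 ≤ η) {y : ℝ}
    (hy : y = 1 ∨ y = -1) :
    1 - Real.exp (-((p : ℝ) - 1) * η ^ 2 / 2) ≤ (toyCond p η y).real {x | toyH p x = y} := by
  have hmeas : MeasurableSet {x | toyH p x = y} := measurable_toyH p (measurableSet_singleton y)
  have := toyCond_real_toyH_ne_le hp hη hy
  rw [← Set.compl_ofPred, probReal_compl_eq_one_sub hmeas] at this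
  linarith

lemma exp_neg_mul_sq_div_two_le_of_sqrt_le {k η δ : ℝ} (hk : 0 < k) (hδ : 0 < δ)
    (h : √(2 * Real.log (1 / δ) / k) ≤ η) : Real.exp (-k * η ^ 2 / 2) ≤ δ := by
  obtain ⟨-, hsq⟩ := Real.sqrt_le_iff.1 h
  rw [div_le_iff₀ hk, one_div, Real.log_inv] at hsq
  rw [← Real.exp_log hδ]
  exact Real.exp_le_exp.2 (by linarith)

/-- Toy-model standard accuracy: `P(h(X) = Y) ≥ 1 − exp(−(p−1)η²/2)`; in particular,
for `δ ∈ (0,1]`, if `η ≥ √(2 log(1/δ)/(p−1))` the accuracy is at least `1 − δ`. -/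
theorem stmt10 (p : ℕ) (hp : 2 ≤ p) (η : ℝ) (hη : 0 < η) :
    1 - Real.exp (-((p : ℝ) - 1) * η ^ 2 / 2)
        ≤ (toyJoint p η {z | toyH p z.1 = z.2}).toReal ∧
    ∀ δ : ℝ, 0 < δ → δ ≤ 1 →
      Real.sqrt (2 * Real.log (1 / δ) / ((p : ℝ) - 1)) ≤ η →
      1 - δ ≤ (toyJoint p η {z | toyH p z.1 = z.2}).toReal := by
  have hacc : 1 - Real.exp (-((p : ℝ) - 1) * η ^ 2 / 2)
      ≤ (toyJoint p η {z | toyH p z.1 = z.2}).toReal := by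
    rw [toyJoint_real_toyH_eq]
    linarith [toyCond_real_toyH_eq_ge hp hη.le (Or.inl rfl),
      toyCond_real_toyH_eq_ge hp hη.le (Or.inr rfl)]
  refine ⟨hacc, fun δ hδ _ hηδ ↦ ?_⟩
  have hp1 : (0 : ℝ) < p - 1 := sub_pos.2 (Nat.one_lt_cast.2 hp)
  linarith [exp_neg_mul_sq_div_two_le_of_sqrt_le hp1 hδ hηδ]
end

section
/- Mutual information bound for Gaussian mixtures: Let Y be uniform on {±1} and X | Y ∼ N(ηY, 1) for η > 0. Then the mutual information I(X;Y) = H(X) − H(X|Y) equals η² − r where r = (2/(√(2π)·η))·e^{−η²/2}·∫₀^∞ e^{−z²/(2η²)}·cosh(z)·log(cosh(z)) dz ≥ 0. In particular I(X;Y) ≤ η². -/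
/-!
With `φ` the standard normal density, the mixture density is
`f x = φ x * exp (-η² / 2) * cosh (η x)`, so `log f = log φ - η² / 2 + log cosh (η x)`.
Integrating against `f` and using `∫ f x * x² = η² + 1` gives
`H(X) = log √(2πe) + η² - ∫ f x * log cosh (η x)`; the substitution `z = η x` and the evenness
of the integrand turn the last integral into `r`, which is nonnegative since `cosh ≥ 1`.
-/

open MeasureTheory ProbabilityTheory Real Set
open scoped NNReal

lemma integral_sq_gaussianReal (μ : ℝ) (v : ℝ≥0) :
    ∫ x, x ^ 2 ∂gaussianReal μ v = μ ^ 2 + v := by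
  have h := variance_eq_sub (memLp_id_gaussianReal (μ := μ) (v := v) 2)
  rw [variance_id_gaussianReal] at h
  simp only [Pi.pow_apply, id_eq, integral_id_gaussianReal] at h
  linarith

lemma integrable_gaussianPDFReal_mul_sq (μ : ℝ) (v : ℝ≥0) :
    Integrable fun x => gaussianPDFReal μ v x * x ^ 2 := by
  rcases eq_or_ne v 0 with rfl | hv
  · simp [gaussianPDFReal_zero_var]
  have h := (memLp_id_gaussianReal (μ := μ) (v := v) 2).integrable_sq
  rw [gaussianReal_of_var_ne_zero μ hv, integrable_withDensity_iff_integrable_smul'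
    (measurable_gaussianPDF μ v) (ae_of_all _ fun _ => gaussianPDF_lt_top)] at h
  simpa [toReal_gaussianPDF] using h

lemma integral_gaussianPDFReal_mul_sq (μ : ℝ) {v : ℝ≥0} (hv : v ≠ 0) :
    ∫ x, gaussianPDFReal μ v x * x ^ 2 = μ ^ 2 + v := by
  rw [← integral_sq_gaussianReal, integral_gaussianReal_eq_integral_smul hv]
  rfl

lemma log_cosh_le_sq_div_two (x : ℝ) : log (cosh x) ≤ x ^ 2 / 2 :=
  (log_le_iff_le_exp (cosh_pos x)).2 (cosh_le_exp_half_sq x)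

noncomputable def gaussianMixturePDF (η x : ℝ) : ℝ :=
  (gaussianPDFReal η 1 x + gaussianPDFReal (-η) 1 x) / 2

lemma gaussianMixturePDF_eq_mul_cosh (η x : ℝ) :
    gaussianMixturePDF η x =
      (√(2 * π))⁻¹ * exp (-η ^ 2 / 2) * (exp (-x ^ 2 / 2) * cosh (η * x)) := by
  have shift (s : ℝ) :
      exp (-(x - s) ^ 2 / 2) = exp (-s ^ 2 / 2) * exp (-x ^ 2 / 2) * exp (s * x) := by
    rw [← exp_add, ← exp_add]
    ring_nf
  simp only [gaussianMixturePDF, gaussianPDFReal, NNReal.coe_one, mul_one, shift, cosh_eq,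
    neg_sq]
  ring_nf

lemma gaussianMixturePDF_pos (η x : ℝ) : 0 < gaussianMixturePDF η x := by
  rw [gaussianMixturePDF_eq_mul_cosh]
  have := cosh_pos (η * x)
  positivity

lemma log_gaussianMixturePDF (η x : ℝ) : log (gaussianMixturePDF η x) =
    -log √(2 * π) - η ^ 2 / 2 - x ^ 2 / 2 + log (cosh (η * x)) := by
  have := cosh_pos (η * x)
  rw [gaussianMixturePDF_eq_mul_cosh, log_mul (by positivity) (by positivity),
    log_mul (by positivity) (by positivity), log_mul (by positivity) this.ne', log_inv,
    log_exp, log_exp]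
  ring

lemma integrable_gaussianMixturePDF (η : ℝ) : Integrable (gaussianMixturePDF η) :=
  ((integrable_gaussianPDFReal η 1).add (integrable_gaussianPDFReal (-η) 1)).div_const 2

lemma integral_gaussianMixturePDF (η : ℝ) : ∫ x, gaussianMixturePDF η x = 1 := by
  simp only [gaussianMixturePDF]
  rw [integral_div,
    integral_add (integrable_gaussianPDFReal η 1) (integrable_gaussianPDFReal (-η) 1),
    integral_gaussianPDFReal_eq_one η one_ne_zero,
    integral_gaussianPDFReal_eq_one (-η) one_ne_zero]
  norm_num

lemma gaussianMixturePDF_mul_sq (η x : ℝ) : gaussianMixturePDF η x * x ^ 2 =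
    (gaussianPDFReal η 1 x * x ^ 2 + gaussianPDFReal (-η) 1 x * x ^ 2) / 2 := by
  rw [gaussianMixturePDF]
  ring

lemma integrable_gaussianMixturePDF_mul_sq (η : ℝ) :
    Integrable fun x => gaussianMixturePDF η x * x ^ 2 := by
  simp only [gaussianMixturePDF_mul_sq]
  exact ((integrable_gaussianPDFReal_mul_sq _ _).add
    (integrable_gaussianPDFReal_mul_sq _ _)).div_const 2

lemma integral_gaussianMixturePDF_mul_sq (η : ℝ) :
    ∫ x, gaussianMixturePDF η x * x ^ 2 = η ^ 2 + 1 := by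
  simp only [gaussianMixturePDF_mul_sq]
  rw [integral_div, integral_add (integrable_gaussianPDFReal_mul_sq _ _)
    (integrable_gaussianPDFReal_mul_sq _ _), integral_gaussianPDFReal_mul_sq _ one_ne_zero,
    integral_gaussianPDFReal_mul_sq _ one_ne_zero]
  push_cast
  ring

lemma integrable_gaussianMixturePDF_mul_log_cosh (η : ℝ) :
    Integrable fun x => gaussianMixturePDF η x * log (cosh (η * x)) := by
  refine ((integrable_gaussianMixturePDF_mul_sq η).const_mul (η ^ 2 / 2)).mono' ?_
    (ae_of_all _ fun x => ?_)
  · unfold gaussianMixturePDF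
    fun_prop
  · have hf := gaussianMixturePDF_pos η x
    rw [norm_of_nonneg (mul_nonneg hf.le (log_nonneg (one_le_cosh _)))]
    calc gaussianMixturePDF η x * log (cosh (η * x))
        ≤ gaussianMixturePDF η x * ((η * x) ^ 2 / 2) := by
          gcongr
          exact log_cosh_le_sq_div_two _
      _ = η ^ 2 / 2 * (gaussianMixturePDF η x * x ^ 2) := by ring

lemma integral_gaussianMixturePDF_mul_log (η : ℝ) :
    ∫ x, gaussianMixturePDF η x * log (gaussianMixturePDF η x) =
      -log √(2 * π) - η ^ 2 - 1 / 2 + ∫ x, gaussianMixturePDF η x * log (cosh (η * x)) := by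
  have hf := integrable_gaussianMixturePDF η
  have hf2 := integrable_gaussianMixturePDF_mul_sq η
  have expand (x : ℝ) : gaussianMixturePDF η x * log (gaussianMixturePDF η x) =
      ((-log √(2 * π) - η ^ 2 / 2) * gaussianMixturePDF η x
        - 2⁻¹ * (gaussianMixturePDF η x * x ^ 2))
        + gaussianMixturePDF η x * log (cosh (η * x)) := by
    rw [log_gaussianMixturePDF]
    ring
  simp only [expand]
  rw [integral_add ?_ (integrable_gaussianMixturePDF_mul_log_cosh η),
    integral_sub (hf.const_mul _) (hf2.const_mul _), integral_const_mul, integral_const_mul,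
    integral_gaussianMixturePDF, integral_gaussianMixturePDF_mul_sq]
  · ring
  · exact (hf.const_mul _).sub (hf2.const_mul _)

lemma integral_gaussianMixturePDF_mul_log_cosh {η : ℝ} (hη : 0 < η) :
    ∫ x, gaussianMixturePDF η x * log (cosh (η * x)) =
      2 / (√(2 * π) * η) * exp (-η ^ 2 / 2) *
        ∫ z in Ioi 0, exp (-z ^ 2 / (2 * η ^ 2)) * cosh z * log (cosh z) := by
  set g : ℝ → ℝ := fun z => exp (-z ^ 2 / (2 * η ^ 2)) * cosh z * log (cosh z)
  have hg (x : ℝ) : exp (-x ^ 2 / 2) * cosh (η * x) * log (cosh (η * x)) = g (η * x) := by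
    simp only [g]
    congr 3
    field_simp
  have g_abs (z : ℝ) : g |z| = g z := by simp only [g, sq_abs, cosh_abs]
  calc ∫ x, gaussianMixturePDF η x * log (cosh (η * x))
      = (√(2 * π))⁻¹ * exp (-η ^ 2 / 2) * ∫ x, g (η * x) := by
        simp only [gaussianMixturePDF_eq_mul_cosh, ← hg, mul_assoc, integral_const_mul]
    _ = (√(2 * π))⁻¹ * exp (-η ^ 2 / 2) * (η⁻¹ * (2 * ∫ z in Ioi 0, g z)) := by
        rw [Measure.integral_comp_mul_left, ← integral_comp_abs, abs_of_pos (inv_pos.2 hη)]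
        simp only [g_abs, smul_eq_mul]
    _ = _ := by field_simp

/-- Mutual information bound for the balanced Gaussian mixture: with `X | Y ∼ N(ηY, 1)`
and `Y` uniform on `{±1}`, the mutual information `I(X;Y) = H(X) − H(X|Y)` equals
`η² − r` with `r ≥ 0` as below; in particular `I(X;Y) ≤ η²`. -/
theorem stmt13 (η : ℝ) (hη : 0 < η) :
    let f : ℝ → ℝ := fun x => (gaussianPDFReal η 1 x + gaussianPDFReal (-η) 1 x) / 2
    let HX : ℝ := -∫ x, f x * Real.log (f x)
    let HXgivenY : ℝ := Real.log (Real.sqrt (2 * π * Real.exp 1))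
    let r : ℝ := 2 / (Real.sqrt (2 * π) * η) * Real.exp (-η ^ 2 / 2) *
      ∫ z in Set.Ioi (0 : ℝ), Real.exp (-z ^ 2 / (2 * η ^ 2)) *
        Real.cosh z * Real.log (Real.cosh z)
    0 ≤ r ∧ HX - HXgivenY = η ^ 2 - r ∧ HX - HXgivenY ≤ η ^ 2 := by
  intro f HX HXgivenY r
  have hr : 0 ≤ r := by
    have hI : 0 ≤ ∫ z in Ioi (0 : ℝ), exp (-z ^ 2 / (2 * η ^ 2)) * cosh z * log (cosh z) :=
      setIntegral_nonneg measurableSet_Ioi fun z _ =>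
        mul_nonneg (by positivity) (log_nonneg (one_le_cosh z))
    exact mul_nonneg (by positivity) hI
  have hHX : HX = log √(2 * π) + η ^ 2 + 1 / 2 - r := by
    change -∫ x, gaussianMixturePDF η x * log (gaussianMixturePDF η x) = _
    rw [integral_gaussianMixturePDF_mul_log, integral_gaussianMixturePDF_mul_log_cosh hη]
    ring
  have hHXgivenY : HXgivenY = log √(2 * π) + 1 / 2 := by
    change log √(2 * π * exp 1) = _
    rw [log_sqrt (by positivity), log_sqrt (by positivity), log_mul (by positivity)
      (exp_pos 1).ne', log_exp]
    ring
  exact ⟨hr, by linarith, by linarith⟩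
end
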